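/- Let H be a Hopf algebra over k with bijective antipode and B ⊆ A a faithfully flat H-Galois extension admitting a strong connection ℓ: H → A⊗A, ℓ(h) = h^{<1>}⊗h^{<2>}, which satisfies ℓ(kh) = h^{<1>}k^{<1>} ⊗ k^{<2>}h^{<2>} for all h,k∈H. Then the linear map ψ_ℓ: A⊗A → A⊗A, a⊗c ↦ a₍₀₎ c (a₍₁₎)^{<1>} ⊗ (a₍₁₎)^{<2>}, is a twisting map, i.e. the product m^{ψ_ℓ} := (m_A⊗m_A)∘(id_A⊗ψ_ℓ⊗id_A) on A⊗A is associative. -/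

import Mathlib

open TensorProduct LinearMap Function

noncomputable section
namespace Paper

variable (k : Type*) [Field k]
section Twist
variable (A : Type*) [Ring A] [Algebra k A] (C : Type*) [Ring C] [Algebra k C]

/-- The twisted multiplication `m^ψ := (m_C ⊗ m_A) ∘ (id_C ⊗ ψ ⊗ id_A)` as a linear map
`(C ⊗ A) ⊗ (C ⊗ A) → C ⊗ A`. -/
def tmulMap (ψ : A ⊗[k] C →ₗ[k] C ⊗[k] A) :
    (C ⊗[k] A) ⊗[k] (C ⊗[k] A) →ₗ[k] C ⊗[k] A :=
  TensorProduct.map (LinearMap.mul' k C) (LinearMap.mul' k A)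
    ∘ₗ (TensorProduct.assoc k (C ⊗[k] C) A A).toLinearMap
    ∘ₗ TensorProduct.map (TensorProduct.assoc k C C A).symm.toLinearMap LinearMap.id
    ∘ₗ TensorProduct.map (LinearMap.lTensor C ψ) LinearMap.id
    ∘ₗ TensorProduct.map (TensorProduct.assoc k C A C).toLinearMap LinearMap.id
    ∘ₗ (TensorProduct.assoc k (C ⊗[k] A) C A).symm.toLinearMap

/-- The twisted product of two elements of `C ⊗ A`. -/
def tmul (ψ : A ⊗[k] C →ₗ[k] C ⊗[k] A) (x y : C ⊗[k] A) : C ⊗[k] A :=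
  tmulMap k A C ψ (x ⊗ₜ y)

/-- `ψ` is a twisting map when the product `m^ψ` is associative. -/
def IsTwistingMap (ψ : A ⊗[k] C →ₗ[k] C ⊗[k] A) : Prop :=
  ∀ x y z : C ⊗[k] A,
    tmul k A C ψ (tmul k A C ψ x y) z = tmul k A C ψ x (tmul k A C ψ y z)

/-- `ψ (a ⊗ 1_C) = 1_C ⊗ a`. -/
def LeftNormal (ψ : A ⊗[k] C →ₗ[k] C ⊗[k] A) : Prop :=
  ∀ a : A, ψ (a ⊗ₜ (1 : C)) = (1 : C) ⊗ₜ a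

/-- `ψ (1_A ⊗ c) = c ⊗ 1_A`. -/
def RightNormal (ψ : A ⊗[k] C →ₗ[k] C ⊗[k] A) : Prop :=
  ∀ c : C, ψ ((1 : A) ⊗ₜ c) = c ⊗ₜ (1 : A)

/-- Distributive law (C1): `ψ ∘ (m_A ⊗ id_C) = (id_C ⊗ m_A) ∘ (ψ ⊗ id_A) ∘ (id_A ⊗ ψ)`. -/
def DistLawC1 (ψ : A ⊗[k] C →ₗ[k] C ⊗[k] A) : Prop :=
  ψ ∘ₗ rTensor C (LinearMap.mul' k A)
    = lTensor C (LinearMap.mul' k A)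
        ∘ₗ (TensorProduct.assoc k C A A).toLinearMap
        ∘ₗ rTensor A ψ
        ∘ₗ (TensorProduct.assoc k A C A).symm.toLinearMap
        ∘ₗ lTensor A ψ
        ∘ₗ (TensorProduct.assoc k A A C).toLinearMap

/-- Distributive law (C2): `ψ ∘ (id_A ⊗ m_C) = (m_C ⊗ id_A) ∘ (id_C ⊗ ψ) ∘ (ψ ⊗ id_C)`. -/
def DistLawC2 (ψ : A ⊗[k] C →ₗ[k] C ⊗[k] A) : Prop :=
  ψ ∘ₗ lTensor A (LinearMap.mul' k C)
    = rTensor A (LinearMap.mul' k C)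
        ∘ₗ (TensorProduct.assoc k C C A).symm.toLinearMap
        ∘ₗ lTensor C ψ
        ∘ₗ (TensorProduct.assoc k C A C).toLinearMap
        ∘ₗ rTensor C ψ
        ∘ₗ (TensorProduct.assoc k A C C).symm.toLinearMap

/-- The left-hand side of the associativity condition (Oeq):
`(id_C ⊗ m_A) ∘ (ψ ⊗ id_A) ∘ (id_A ⊗ m_C ⊗ id_A) ∘ (id_A ⊗ id_C ⊗ ψ)`. -/
def OeqLHS (ψ : A ⊗[k] C →ₗ[k] C ⊗[k] A) :
    (A ⊗[k] C) ⊗[k] (A ⊗[k] C) →ₗ[k] C ⊗[k] A :=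
  lTensor C (LinearMap.mul' k A)
    ∘ₗ (TensorProduct.assoc k C A A).toLinearMap
    ∘ₗ rTensor A ψ
    ∘ₗ TensorProduct.map (lTensor A (LinearMap.mul' k C)) LinearMap.id
    ∘ₗ TensorProduct.map (TensorProduct.assoc k A C C).toLinearMap LinearMap.id
    ∘ₗ (TensorProduct.assoc k (A ⊗[k] C) C A).symm.toLinearMap
    ∘ₗ lTensor (A ⊗[k] C) ψ

/-- The right-hand side of the associativity condition (Oeq):
`(m_C ⊗ id_A) ∘ (id_C ⊗ ψ) ∘ (id_C ⊗ m_A ⊗ id_C) ∘ (ψ ⊗ id_A ⊗ id_C)`. -/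
def OeqRHS (ψ : A ⊗[k] C →ₗ[k] C ⊗[k] A) :
    (A ⊗[k] C) ⊗[k] (A ⊗[k] C) →ₗ[k] C ⊗[k] A :=
  rTensor A (LinearMap.mul' k C)
    ∘ₗ (TensorProduct.assoc k C C A).symm.toLinearMap
    ∘ₗ lTensor C ψ
    ∘ₗ (TensorProduct.assoc k C A C).toLinearMap
    ∘ₗ TensorProduct.map (lTensor C (LinearMap.mul' k A)) LinearMap.id
    ∘ₗ TensorProduct.map (TensorProduct.assoc k C A A).toLinearMap LinearMap.id
    ∘ₗ (TensorProduct.assoc k (C ⊗[k] A) A C).symm.toLinearMap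
    ∘ₗ rTensor (A ⊗[k] C) ψ

/-- The set of relations `c ⊗ (b·a) - (c·F(b)) ⊗ a` defining the push-forward `C ⊗_B A`. -/
def relSet (B : Subalgebra k A) (F : B →ₐ[k] C) : Set (C ⊗[k] A) :=
  {x | ∃ (c : C) (b : B) (a : A), x = c ⊗ₜ ((b : A) * a) - (c * F b) ⊗ₜ a}

/-- The subspace spanned by the relations defining the push-forward `C ⊗_B A`. -/
def relSpan (B : Subalgebra k A) (F : B →ₐ[k] C) : Submodule k (C ⊗[k] A) :=
  Submodule.span k (relSet k A C B F)

end Twist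
section Star
variable [StarRing k] [TrivialStar k]
variable (X : Type*) [Ring X] [Algebra k X] [StarRing X] [StarModule k X]
variable (Y : Type*) [Ring Y] [Algebra k Y] [StarRing Y] [StarModule k Y]

/-- The map `(∗_Y ⊗ ∗_X) ∘ flip : X ⊗ Y → Y ⊗ X`, `x ⊗ y ↦ y* ⊗ x*`. -/
def starFlip : X ⊗[k] Y →ₗ[k] Y ⊗[k] X :=
  TensorProduct.lift (LinearMap.mk₂ k (fun x y => (star y : Y) ⊗ₜ[k] (star x : X))
    (fun x x' y => by simp [star_add, TensorProduct.tmul_add])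
    (fun r x y => by simp [star_smul, star_trivial, TensorProduct.tmul_smul])
    (fun x y y' => by simp [star_add, TensorProduct.add_tmul])
    (fun r x y => by simp [star_smul, star_trivial, TensorProduct.smul_tmul']))

@[simp] lemma starFlip_tmul (x : X) (y : Y) :
    starFlip k X Y (x ⊗ₜ y) = (star y : Y) ⊗ₜ (star x : X) := rfl

end Star
section Flat
variable (R : Type*) [Ring R] (M : Type*) [AddCommGroup M] [Module R M]

/-- Flatness of a left module over a (possibly noncommutative) ring, via the equational
criterion: every linear relation among elements of `M` is a consequence of linear relations
holding in `R`. -/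
def IsFlatLeft : Prop :=
  ∀ (n : ℕ) (r : Fin n → R) (x : Fin n → M), (∑ i, r i • x i) = 0 →
    ∃ (m : ℕ) (a : Fin n → Fin m → R) (y : Fin m → M),
      (∀ i, x i = ∑ j, a i j • y j) ∧ ∀ j, (∑ i, r i * a i j) = 0

/-- Faithful flatness of a left module over a (possibly noncommutative) ring: flatness
together with `I·M ≠ M` for every maximal right ideal `I` of `R`. -/
def IsFaithfullyFlatLeft : Prop :=
  IsFlatLeft R M ∧ ∀ I : Submodule Rᵐᵒᵖ R, IsCoatom I →
    AddSubgroup.closure {z : M | ∃ i ∈ I, ∃ v : M, z = i • v} ≠ ⊤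

end Flat
section Hopf
variable (A : Type*) [Ring A] [Algebra k A] (C : Type*) [Ring C] [Algebra k C]
variable (H : Type*) [Ring H] [HopfAlgebra k H]

/-- `δ : A → A ⊗ H` makes `A` a right `H`-comodule algebra: `δ` is an algebra map (built in)
which is coassociative and counital. -/
def IsComodAlg (δ : A →ₐ[k] A ⊗[k] H) : Prop :=
  ((TensorProduct.assoc k A H H).toLinearMap ∘ₗ rTensor H δ.toLinearMap ∘ₗ δ.toLinearMap
      = lTensor A (Coalgebra.comul (R := k) (A := H)) ∘ₗ δ.toLinearMap)
    ∧ ((TensorProduct.rid k A).toLinearMap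
        ∘ₗ lTensor A (Coalgebra.counit (R := k) (A := H)) ∘ₗ δ.toLinearMap
      = LinearMap.id)

/-- The subalgebra `A^{co H}` of coinvariant elements of a comodule algebra. -/
def coinv (δ : A →ₐ[k] A ⊗[k] H) : Subalgebra k A where
  carrier := {a | δ a = a ⊗ₜ[k] (1 : H)}
  mul_mem' := by
    intro a b ha hb
    simp only [Set.mem_setOf_eq] at *
    rw [map_mul, ha, hb, Algebra.TensorProduct.tmul_mul_tmul, one_mul]
  one_mem' := by
    simp only [Set.mem_setOf_eq, map_one, Algebra.TensorProduct.one_def]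
  add_mem' := by
    intro a b ha hb
    simp only [Set.mem_setOf_eq] at *
    rw [map_add, ha, hb, TensorProduct.add_tmul]
  algebraMap_mem' := by
    intro r
    simp only [Set.mem_setOf_eq, AlgHom.commutes, Algebra.TensorProduct.algebraMap_apply]

/-- The canonical map `A ⊗ A → A ⊗ H`, `a ⊗ a' ↦ a a'₍₀₎ ⊗ a'₍₁₎` (before taking the
quotient `A ⊗_B A`). -/
def chi0 (δ : A →ₐ[k] A ⊗[k] H) : A ⊗[k] A →ₗ[k] A ⊗[k] H :=
  rTensor H (LinearMap.mul' k A)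
    ∘ₗ (TensorProduct.assoc k A A H).symm.toLinearMap
    ∘ₗ lTensor A δ.toLinearMap

/-- The coaction `id_C ⊗ δ` on `C ⊗ A` (with `C` a trivial comodule), as a map
`C ⊗ A → (C ⊗ A) ⊗ H`. -/
def coactT (δ : A →ₐ[k] A ⊗[k] H) : C ⊗[k] A →ₗ[k] (C ⊗[k] A) ⊗[k] H :=
  (TensorProduct.assoc k C A H).symm.toLinearMap ∘ₗ lTensor C δ.toLinearMap

/-- `ψ : A ⊗ C → C ⊗ A` is a morphism of right `H`-comodules:
`(id_C ⊗ δ) ∘ ψ = (ψ ⊗ id_H) ∘ (id_A ⊗ flip) ∘ (δ ⊗ id_C)`. -/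
def IsComodMor (δ : A →ₐ[k] A ⊗[k] H) (ψ : A ⊗[k] C →ₗ[k] C ⊗[k] A) : Prop :=
  lTensor C δ.toLinearMap ∘ₗ ψ
    = (TensorProduct.assoc k C A H).toLinearMap
        ∘ₗ rTensor H ψ
        ∘ₗ (TensorProduct.assoc k A C H).symm.toLinearMap
        ∘ₗ lTensor A (TensorProduct.comm k H C).toLinearMap
        ∘ₗ (TensorProduct.assoc k A H C).toLinearMap
        ∘ₗ rTensor C δ.toLinearMap

variable {k H} in
/-- Given a multiplication `m` on `P`, the induced multiplication on `P ⊗ H`. -/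
def tmulH {P : Type*} [AddCommGroup P] [Module k P] (m : P →ₗ[k] P →ₗ[k] P) :
    P ⊗[k] H →ₗ[k] P ⊗[k] H →ₗ[k] P ⊗[k] H :=
  TensorProduct.map₂ m (LinearMap.mul k H)

variable {k H} in
/-- The canonical Galois map `P ⊗ P → P ⊗ H`, `x ⊗ y ↦ (x ·_m y₍₀₎) ⊗ y₍₁₎`, for a
multiplication `m` and a coaction `db` on `P`. -/
def chiP {P : Type*} [AddCommGroup P] [Module k P]
    (m : P →ₗ[k] P →ₗ[k] P) (db : P →ₗ[k] P ⊗[k] H) : P ⊗[k] P →ₗ[k] P ⊗[k] H :=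
  rTensor H (TensorProduct.lift m)
    ∘ₗ (TensorProduct.assoc k P P H).symm.toLinearMap
    ∘ₗ lTensor P db

variable {k C} in
/-- The span of the relations `(x ·_m e c) ⊗ y - x ⊗ (e c ·_m y)` defining the balanced tensor
product `P ⊗_C P` over the image of `C` in `P`. -/
def balSpan {P : Type*} [AddCommGroup P] [Module k P]
    (m : P →ₗ[k] P →ₗ[k] P) (e : C → P) : Submodule k (P ⊗[k] P) :=
  Submodule.span k {z | ∃ (x y : P) (c : C), z = (m x (e c)) ⊗ₜ y - x ⊗ₜ (m (e c) y)}

variable {k H} in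
/-- Coassociativity of a coaction `db : P → P ⊗ H`. -/
def Coassoc {P : Type*} [AddCommGroup P] [Module k P] (db : P →ₗ[k] P ⊗[k] H) : Prop :=
  (TensorProduct.assoc k P H H).toLinearMap ∘ₗ rTensor H db ∘ₗ db
    = lTensor P (Coalgebra.comul (R := k) (A := H)) ∘ₗ db

variable {k H} in
/-- Counitality of a coaction `db : P → P ⊗ H`. -/
def Counital {P : Type*} [AddCommGroup P] [Module k P] (db : P →ₗ[k] P ⊗[k] H) : Prop :=
  (TensorProduct.rid k P).toLinearMap
      ∘ₗ lTensor P (Coalgebra.counit (R := k) (A := H)) ∘ₗ db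
    = LinearMap.id

variable {k H} in
/-- Convolution product of two linear maps `H → P`, with respect to a multiplication `m`
on `P`. -/
def convP {P : Type*} [AddCommGroup P] [Module k P]
    (m : P →ₗ[k] P →ₗ[k] P) (f g : H →ₗ[k] P) : H →ₗ[k] P :=
  TensorProduct.lift m ∘ₗ TensorProduct.map f g ∘ₗ Coalgebra.comul (R := k) (A := H)

variable {k H} in
/-- The unit for convolution: `h ↦ ε(h) • u`. -/
def convUnit {P : Type*} [AddCommGroup P] [Module k P] (u : P) : H →ₗ[k] P :=
  (Coalgebra.counit (R := k) (A := H)).smulRight u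

end Hopf

section HopfPush
variable (A : Type*) [Ring A] [Algebra k A] (C : Type*) [Ring C] [Algebra k C]
variable (H : Type*) [Ring H] [HopfAlgebra k H]
section PushForward
variable (δ : A →ₐ[k] A ⊗[k] H) (F : coinv k A H δ →ₐ[k] C)

/-- The subspace of `C ⊗ A` defining the push-forward `C ⊗_B A`, `B = A^{co H}`. -/
def pushSpan : Submodule k (C ⊗[k] A) := relSpan k A C (coinv k A H δ) F

/-- The quotient map `C ⊗ A → C ⊗_B A`. -/
def pushQ : C ⊗[k] A →ₗ[k] (C ⊗[k] A) ⧸ pushSpan k A C H δ F :=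
  (pushSpan k A C H δ F).mkQ

/-- `\barψ = π_B ∘ ψ` is a `B`-bimodule morphism. -/
def BarBimod (ψ : A ⊗[k] C →ₗ[k] C ⊗[k] A) : Prop :=
  (∀ (b : coinv k A H δ) (a : A) (c : C),
      pushQ k A C H δ F (ψ (((b : A) * a) ⊗ₜ c))
        = pushQ k A C H δ F (rTensor A (LinearMap.mulLeft k (F b)) (ψ (a ⊗ₜ c))))
  ∧ (∀ (b : coinv k A H δ) (a : A) (c : C),
      pushQ k A C H δ F (ψ (a ⊗ₜ (c * F b)))
        = pushQ k A C H δ F (lTensor C (LinearMap.mulRight k (b : A)) (ψ (a ⊗ₜ c))))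

/-- `\barψ (1_A ⊗ c) = c ⊗_B 1_A` and `\barψ (a ⊗ 1_C) = 1_C ⊗_B a`. -/
def BarNormal (ψ : A ⊗[k] C →ₗ[k] C ⊗[k] A) : Prop :=
  (∀ c : C, pushQ k A C H δ F (ψ ((1 : A) ⊗ₜ c)) = pushQ k A C H δ F (c ⊗ₜ (1 : A)))
  ∧ (∀ a : A, pushQ k A C H δ F (ψ (a ⊗ₜ (1 : C))) = pushQ k A C H δ F ((1 : C) ⊗ₜ a))

/-- `σ` is the canonical left `C`-action on the push-forward `C ⊗_B A`:
`σ c (c' ⊗_B a) = (c c') ⊗_B a`. -/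
def SigmaSpec (σ : C →ₗ[k] ((C ⊗[k] A) ⧸ pushSpan k A C H δ F)
    →ₗ[k] ((C ⊗[k] A) ⧸ pushSpan k A C H δ F)) : Prop :=
  ∀ (c : C) (x : C ⊗[k] A),
    σ c (pushQ k A C H δ F x) = pushQ k A C H δ F (rTensor A (LinearMap.mulLeft k c) x)

/-- The distributive law `\barψ (a ⊗ c c') = c^ψ · \barψ (a^ψ ⊗ c')`, where `·` denotes the
left `C`-action `σ` on the push-forward. -/
def BarDistrib (ψ : A ⊗[k] C →ₗ[k] C ⊗[k] A)
    (σ : C →ₗ[k] ((C ⊗[k] A) ⧸ pushSpan k A C H δ F)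
      →ₗ[k] ((C ⊗[k] A) ⧸ pushSpan k A C H δ F)) : Prop :=
  (pushQ k A C H δ F ∘ₗ ψ) ∘ₗ lTensor A (LinearMap.mul' k C)
    = TensorProduct.lift σ
        ∘ₗ lTensor C (pushQ k A C H δ F ∘ₗ ψ)
        ∘ₗ (TensorProduct.assoc k C A C).toLinearMap
        ∘ₗ rTensor C ψ
        ∘ₗ (TensorProduct.assoc k A C C).symm.toLinearMap

/-- The embedding `C → C ⊗_B A`, `c ↦ c ⊗_B 1_A`. -/
def eC : C → (C ⊗[k] A) ⧸ pushSpan k A C H δ F :=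
  fun c => pushQ k A C H δ F (c ⊗ₜ (1 : A))

end PushForward

section Galois
variable (δ : A →ₐ[k] A ⊗[k] H)

/-- The subspace of `A ⊗ A` defining the balanced tensor product `A ⊗_B A`, `B = A^{co H}`. -/
def galSpan : Submodule k (A ⊗[k] A) :=
  relSpan k A A (coinv k A H δ) (coinv k A H δ).val

/-- The quotient map `A ⊗ A → A ⊗_B A`. -/
def galQ : A ⊗[k] A →ₗ[k] (A ⊗[k] A) ⧸ galSpan k A H δ := (galSpan k A H δ).mkQ

/-- The translation map `τ = χ⁻¹(1_A ⊗ -) : H → A ⊗_B A` obtained from a bijective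
canonical map `χ`. -/
def transMap (χ : ((A ⊗[k] A) ⧸ galSpan k A H δ) ≃ₗ[k] A ⊗[k] H) :
    H →ₗ[k] (A ⊗[k] A) ⧸ galSpan k A H δ :=
  χ.symm.toLinearMap ∘ₗ TensorProduct.mk k A H 1

end Galois
end HopfPush
end Paper

/-!
Write `Φ(x ⊗ h) = x h⁽¹⁾ ⊗ h⁽²⁾` (this is `leftLift ℓ`). Then `ψ_ℓ(a ⊗ c) = Φ(a₍₀₎ c ⊗ a₍₁₎)`, the
twisted product is `(c ⊗ a)(c' ⊗ a') = (c ⊗ 1) ψ_ℓ(a ⊗ c') (1 ⊗ a')`, and both bracketings of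
`(c ⊗ a)(c' ⊗ a')(c'' ⊗ a'')` reduce to `(c ⊗ 1) Φ(δ(a)(c' ⊗ 1) δ(a')(c'' ⊗ 1)) (1 ⊗ a'')`.
For the left bracketing this holds because `Φ` is a section of the canonical map
`x ⊗ y ↦ x y₍₀₎ ⊗ y₍₁₎` (that is what `π_B ∘ ℓ = τ` says); for the right bracketing because
`ℓ(hg) = g⁽¹⁾ h⁽¹⁾ ⊗ h⁽²⁾ g⁽²⁾`.
-/

namespace Paper

section MulLift

variable {R S X Y : Type*} [CommSemiring R] [Semiring S] [Algebra R S]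
  [AddCommMonoid X] [Module R X] [AddCommMonoid Y] [Module R Y]

def mulLift (f : X →ₗ[R] S) (g : Y →ₗ[R] S) : X ⊗[R] Y →ₗ[R] S :=
  LinearMap.mul' R S ∘ₗ TensorProduct.map f g

@[simp] lemma mulLift_tmul (f : X →ₗ[R] S) (g : Y →ₗ[R] S) (x : X) (y : Y) :
    mulLift f g (x ⊗ₜ y) = f x * g y := rfl

lemma mulLift_add_left (f f' : X →ₗ[R] S) (g : Y →ₗ[R] S) :
    mulLift (f + f') g = mulLift f g + mulLift f' g := by
  ext; simp [add_mul]

lemma mulLift_mulLeft_comp (s : S) (f : X →ₗ[R] S) (g : Y →ₗ[R] S) :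
    mulLift (mulLeft R s ∘ₗ f) g = mulLeft R s ∘ₗ mulLift f g := by
  ext; simp [mul_assoc]

end MulLift

section LeftRightLift

variable {R A B Y : Type*} [CommSemiring R] [Semiring A] [Algebra R A] [Semiring B] [Algebra R B]
  [AddCommMonoid Y] [Module R Y]

def leftLift (f : Y →ₗ[R] A ⊗[R] B) : A ⊗[R] Y →ₗ[R] A ⊗[R] B :=
  mulLift ((TensorProduct.mk R A B).flip 1) f

def rightLift (f : Y →ₗ[R] A ⊗[R] B) : Y ⊗[R] B →ₗ[R] A ⊗[R] B :=
  mulLift f (TensorProduct.mk R A B 1)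

@[simp] lemma leftLift_tmul (f : Y →ₗ[R] A ⊗[R] B) (x : A) (y : Y) :
    leftLift f (x ⊗ₜ y) = (x ⊗ₜ 1) * f y := rfl

@[simp] lemma rightLift_tmul (f : Y →ₗ[R] A ⊗[R] B) (y : Y) (b : B) :
    rightLift f (y ⊗ₜ b) = f y * (1 ⊗ₜ b) := rfl

lemma leftLift_tmul_one_mul {C : Type*} [Semiring C] [Algebra R C] (f : C →ₗ[R] A ⊗[R] B)
    (x : A) (z : A ⊗[R] C) : leftLift f ((x ⊗ₜ 1) * z) = (x ⊗ₜ 1) * leftLift f z := by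
  induction z using TensorProduct.induction_on with
  | zero => simp
  | tmul x' c => simp [Algebra.TensorProduct.tmul_mul_tmul, ← mul_assoc]
  | add z z' hz hz' => simp only [mul_add, map_add, hz, hz']

lemma leftLift_comp {C : Type*} [Semiring C] [Algebra R C] (F : A ⊗[R] C →ₗ[R] A ⊗[R] B)
    (hF : ∀ x z, F ((x ⊗ₜ 1) * z) = (x ⊗ₜ 1) * F z) (f : Y →ₗ[R] A ⊗[R] C) :
    leftLift (F ∘ₗ f) = F ∘ₗ leftLift f := by
  ext x y
  simp [hF]

lemma rightLift_tmul_one_mul (f : A →ₗ[R] A ⊗[R] B) (p : A) (s : A ⊗[R] B) :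
    rightLift f ((p ⊗ₜ 1) * s) = rightLift (f ∘ₗ mulLeft R p) s := by
  induction s using TensorProduct.induction_on with
  | zero => simp
  | tmul a b => simp [Algebra.TensorProduct.tmul_mul_tmul]
  | add s s' hs hs' => simp only [mul_add, map_add, hs, hs']

lemma rightLift_add (f f' : Y →ₗ[R] A ⊗[R] B) :
    rightLift (f + f') = rightLift f + rightLift f' :=
  mulLift_add_left f f' _

lemma rightLift_mulLeft_comp (t : A ⊗[R] B) (f : Y →ₗ[R] A ⊗[R] B) :
    rightLift (mulLeft R t ∘ₗ f) = mulLeft R t ∘ₗ rightLift f :=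
  mulLift_mulLeft_comp t f _

end LeftRightLift

section Connection

variable {k A H : Type*} [CommSemiring k] [Semiring A] [Algebra k A] [Semiring H] [Algebra k H]
  (δ : A →ₐ[k] A ⊗[k] H) (ℓ : H →ₗ[k] A ⊗[k] A)

lemma leftLift_comp_leftLift_eq_id (hgal : ∀ h, leftLift δ.toLinearMap (ℓ h) = 1 ⊗ₜ h) :
    leftLift δ.toLinearMap ∘ₗ leftLift ℓ = LinearMap.id := by
  ext x h
  simp [leftLift_tmul_one_mul, hgal]

lemma leftLift_mulRight_comp_apply_leftLift (hgal : ∀ h, leftLift δ.toLinearMap (ℓ h) = 1 ⊗ₜ h)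
    (t w : A ⊗[k] H) :
    leftLift (leftLift ℓ ∘ₗ mulRight k w ∘ₗ δ.toLinearMap) (leftLift ℓ t)
      = leftLift ℓ (t * w) := by
  have hF : ∀ x z, (leftLift ℓ ∘ₗ mulRight k w) ((x ⊗ₜ 1) * z)
      = (x ⊗ₜ 1) * (leftLift ℓ ∘ₗ mulRight k w) z := by
    intro x z
    simp [mul_assoc, leftLift_tmul_one_mul]
  rw [← LinearMap.comp_assoc, leftLift_comp _ hF, LinearMap.comp_apply,
    ← LinearMap.comp_apply (leftLift δ.toLinearMap), leftLift_comp_leftLift_eq_id δ ℓ hgal]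
  rfl

lemma rightLift_mulLeft_comp_apply
    (hmul : ∀ h g,
      ℓ (h * g) = rightLift (mulRight k (ℓ h) ∘ₗ (TensorProduct.mk k A A).flip 1) (ℓ g))
    (t : A ⊗[k] H) (g : H) :
    rightLift (leftLift ℓ ∘ₗ mulLeft k t ∘ₗ (TensorProduct.mk k A H).flip 1) (ℓ g)
      = leftLift ℓ (t * (1 ⊗ₜ g)) := by
  induction t using TensorProduct.induction_on with
  | zero => simp [rightLift, mulLift]
  | tmul x h =>
    have hcomp : leftLift ℓ ∘ₗ mulLeft k (x ⊗ₜ h) ∘ₗ (TensorProduct.mk k A H).flip 1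
        = mulLeft k (x ⊗ₜ 1) ∘ₗ mulRight k (ℓ h) ∘ₗ (TensorProduct.mk k A A).flip 1 := by
      ext p
      simp [Algebra.TensorProduct.tmul_mul_tmul, ← mul_assoc]
    rw [hcomp, rightLift_mulLeft_comp, LinearMap.comp_apply, ← hmul]
    simp [Algebra.TensorProduct.tmul_mul_tmul]
  | add t t' ht ht' =>
    have hadd : mulLeft k (t + t') = mulLeft k t + mulLeft k t' :=
      LinearMap.ext fun _ => add_mul _ _ _
    rw [hadd, LinearMap.add_comp, LinearMap.comp_add, rightLift_add, LinearMap.add_apply, ht, ht',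
      add_mul, map_add]

lemma rightLift_mulLeft_comp_apply_leftLift
    (hmul : ∀ h g,
      ℓ (h * g) = rightLift (mulRight k (ℓ h) ∘ₗ (TensorProduct.mk k A A).flip 1) (ℓ g))
    (t w : A ⊗[k] H) :
    rightLift (leftLift ℓ ∘ₗ mulLeft k t ∘ₗ (TensorProduct.mk k A H).flip 1) (leftLift ℓ w)
      = leftLift ℓ (t * w) := by
  induction w using TensorProduct.induction_on with
  | zero => simp
  | tmul u g =>
    have hcomp : (leftLift ℓ ∘ₗ mulLeft k t ∘ₗ (TensorProduct.mk k A H).flip 1) ∘ₗ mulLeft k u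
        = leftLift ℓ ∘ₗ mulLeft k (t * (u ⊗ₜ 1)) ∘ₗ (TensorProduct.mk k A H).flip 1 := by
      ext p
      simp [Algebra.TensorProduct.tmul_mul_tmul]
    rw [leftLift_tmul, rightLift_tmul_one_mul, hcomp, rightLift_mulLeft_comp_apply ℓ hmul,
      mul_assoc, Algebra.TensorProduct.tmul_mul_tmul, mul_one, one_mul]
  | add w w' hw hw' => simp only [map_add, mul_add, hw, hw']

end Connection

section Twisting

variable {k A C : Type*} [Field k] [Ring A] [Algebra k A] [Ring C] [Algebra k C]
  (ψ : A ⊗[k] C →ₗ[k] C ⊗[k] A)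

lemma tmul_tmul_tmul (c : C) (a : A) (c' : C) (a' : A) :
    tmul k A C ψ (c ⊗ₜ a) (c' ⊗ₜ a') = (c ⊗ₜ 1) * ψ (a ⊗ₜ c') * (1 ⊗ₜ a') := by
  simp only [tmul, tmulMap, LinearMap.comp_apply, LinearEquiv.coe_coe, assoc_symm_tmul, map_tmul,
    assoc_tmul, lTensor_tmul, LinearMap.id_coe, id_eq]
  induction ψ (a ⊗ₜ c') using TensorProduct.induction_on with
  | zero => simp
  | tmul d e => simp [Algebra.TensorProduct.tmul_mul_tmul]
  | add s s' hs hs' => simp only [tmul_add, map_add, add_mul, mul_add, hs, hs', add_tmul]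

lemma tmul_add_left (x x' y : C ⊗[k] A) :
    tmul k A C ψ (x + x') y = tmul k A C ψ x y + tmul k A C ψ x' y := by
  simp [tmul, add_tmul]

lemma tmul_add_right (x y y' : C ⊗[k] A) :
    tmul k A C ψ x (y + y') = tmul k A C ψ x y + tmul k A C ψ x y' := by
  simp [tmul, tmul_add]

lemma isTwistingMap_of_tmul
    (h : ∀ c a c' a' c'' a'', tmul k A C ψ (tmul k A C ψ (c ⊗ₜ a) (c' ⊗ₜ a')) (c'' ⊗ₜ a'')
      = tmul k A C ψ (c ⊗ₜ a) (tmul k A C ψ (c' ⊗ₜ a') (c'' ⊗ₜ a''))) :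
    IsTwistingMap k A C ψ := by
  intro x y z
  induction x using TensorProduct.induction_on with
  | zero => simp [tmul]
  | add x x' hx hx' => simp only [tmul_add_left, hx, hx']
  | tmul c a =>
    induction y using TensorProduct.induction_on with
    | zero => simp [tmul]
    | add y y' hy hy' => simp only [tmul_add_left, tmul_add_right, hy, hy']
    | tmul c' a' =>
      induction z using TensorProduct.induction_on with
      | zero => simp [tmul]
      | add z z' hz hz' => simp only [tmul_add_right, hz, hz']
      | tmul c'' a'' => exact h c a c' a' c'' a''

lemma tmul_mul_mul_left (c : C) (a' : A) (s : C ⊗[k] A) (c'' : C) (a'' : A) :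
    tmul k A C ψ ((c ⊗ₜ 1) * s * (1 ⊗ₜ a')) (c'' ⊗ₜ a'')
      = (c ⊗ₜ 1) * leftLift (ψ ∘ₗ (TensorProduct.mk k A C).flip c'' ∘ₗ mulRight k a') s
        * (1 ⊗ₜ a'') := by
  induction s using TensorProduct.induction_on with
  | zero => simp [tmul]
  | tmul d e =>
    simp [Algebra.TensorProduct.tmul_mul_tmul, tmul_tmul_tmul, ← mul_assoc]
  | add s s' hs hs' => simp only [mul_add, add_mul, map_add, tmul_add_left, hs, hs']

lemma tmul_mul_mul_right (c : C) (a : A) (c' : C) (s : C ⊗[k] A) (a'' : A) :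
    tmul k A C ψ (c ⊗ₜ a) ((c' ⊗ₜ 1) * s * (1 ⊗ₜ a''))
      = (c ⊗ₜ 1) * rightLift (ψ ∘ₗ TensorProduct.mk k A C a ∘ₗ mulLeft k c') s
        * (1 ⊗ₜ a'') := by
  induction s using TensorProduct.induction_on with
  | zero => simp [tmul]
  | tmul d e =>
    simp [Algebra.TensorProduct.tmul_mul_tmul, tmul_tmul_tmul, mul_assoc]
  | add s s' hs hs' => simp only [mul_add, add_mul, map_add, tmul_add_right, hs, hs']

end Twisting

theorem isTwistingMap_leftLift_comp_mulLift {k A H : Type*} [Field k] [Ring A] [Algebra k A]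
    [Semiring H] [Algebra k H] (δ : A →ₐ[k] A ⊗[k] H) (ℓ : H →ₗ[k] A ⊗[k] A)
    (hgal : ∀ h, leftLift δ.toLinearMap (ℓ h) = 1 ⊗ₜ h)
    (hmul : ∀ h g, ℓ (h * g)
      = rightLift (mulRight k (ℓ h) ∘ₗ (TensorProduct.mk k A A).flip 1) (ℓ g)) :
    IsTwistingMap k A A
      (leftLift ℓ ∘ₗ mulLift δ.toLinearMap ((TensorProduct.mk k A H).flip 1)) := by
  set ψ := leftLift ℓ ∘ₗ mulLift δ.toLinearMap ((TensorProduct.mk k A H).flip 1)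
  have hψ : ∀ a c, ψ (a ⊗ₜ c) = leftLift ℓ (δ a * (c ⊗ₜ 1)) := fun _ _ => rfl
  refine isTwistingMap_of_tmul ψ fun c a c' a' c'' a'' => ?_
  have hL : ψ ∘ₗ (TensorProduct.mk k A A).flip c'' ∘ₗ mulRight k a'
      = leftLift ℓ ∘ₗ mulRight k (δ a' * (c'' ⊗ₜ 1)) ∘ₗ δ.toLinearMap := by
    ext e
    simp [hψ, mul_assoc]
  have hR : ψ ∘ₗ TensorProduct.mk k A A a ∘ₗ mulLeft k c'
      = leftLift ℓ ∘ₗ mulLeft k (δ a * (c' ⊗ₜ 1)) ∘ₗ (TensorProduct.mk k A H).flip 1 := by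
    ext p
    simp [hψ, Algebra.TensorProduct.tmul_mul_tmul]
  rw [tmul_tmul_tmul, tmul_mul_mul_left, tmul_tmul_tmul, tmul_mul_mul_right, hL, hR, hψ, hψ,
    leftLift_mulRight_comp_apply_leftLift δ ℓ hgal, rightLift_mulLeft_comp_apply_leftLift ℓ hmul,
    mul_assoc]

lemma connectionTwist_eq_leftLift_comp_mulLift {k A H : Type*} [CommSemiring k] [Semiring A]
    [Algebra k A] [Semiring H] [Algebra k H] (δ : A →ₐ[k] A ⊗[k] H) (ℓ : H →ₗ[k] A ⊗[k] A) :
    TensorProduct.map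
          (LinearMap.mul' k A ∘ₗ lTensor A (LinearMap.mul' k A)) LinearMap.id
        ∘ₗ TensorProduct.map (lTensor A (TensorProduct.comm k A A).toLinearMap
            ∘ₗ (TensorProduct.assoc k A A A).toLinearMap) LinearMap.id
        ∘ₗ (TensorProduct.assoc k (A ⊗[k] A) A A).symm.toLinearMap
        ∘ₗ lTensor (A ⊗[k] A) (TensorProduct.comm k A A).toLinearMap
        ∘ₗ (TensorProduct.assoc k (A ⊗[k] A) A A).toLinearMap
        ∘ₗ TensorProduct.map (TensorProduct.assoc k A A A).symm.toLinearMap LinearMap.id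
        ∘ₗ TensorProduct.map (lTensor A ℓ) LinearMap.id
        ∘ₗ rTensor A δ.toLinearMap
      = leftLift ℓ ∘ₗ mulLift δ.toLinearMap ((TensorProduct.mk k A H).flip 1) := by
  apply TensorProduct.ext'
  intro a c
  simp only [LinearMap.comp_apply, rTensor_tmul, mulLift_tmul]
  induction δ.toLinearMap a using TensorProduct.induction_on with
  | zero => simp
  | tmul x h =>
    simp only [map_tmul, lTensor_tmul, LinearMap.id_coe, id_eq, LinearEquiv.coe_coe,
      LinearMap.flip_apply, TensorProduct.mk_apply, Algebra.TensorProduct.tmul_mul_tmul, mul_one,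
      leftLift_tmul]
    induction ℓ h using TensorProduct.induction_on with
    | zero => simp
    | tmul u v => simp [Algebra.TensorProduct.tmul_mul_tmul, mul_assoc]
    | add s s' hs hs' => simp only [tmul_add, add_tmul, map_add, mul_add, hs, hs']
  | add t t' ht ht' => simp only [add_tmul, map_add, add_mul, ht, ht']

section Galois

variable {k A H : Type*} [Field k] [Ring A] [Algebra k A] [Ring H] [HopfAlgebra k H]
  (δ : A →ₐ[k] A ⊗[k] H)

lemma chi0_eq_leftLift : chi0 k A H δ = leftLift δ.toLinearMap := by
  refine TensorProduct.ext' fun x y => ?_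
  simp only [chi0, LinearMap.comp_apply, LinearEquiv.coe_coe, lTensor_tmul, leftLift_tmul]
  induction δ.toLinearMap y using TensorProduct.induction_on with
  | zero => simp
  | tmul a h => simp [Algebra.TensorProduct.tmul_mul_tmul]
  | add t t' ht ht' => simp only [tmul_add, map_add, mul_add, ht, ht']

lemma leftLift_apply_of_galQ_comp_eq_transMap (χ : ((A ⊗[k] A) ⧸ galSpan k A H δ) ≃ₗ[k] A ⊗[k] H)
    (hχ : ∀ x : A ⊗[k] A, χ (galQ k A H δ x) = chi0 k A H δ x)
    (ℓ : H →ₗ[k] A ⊗[k] A) (hℓ : galQ k A H δ ∘ₗ ℓ = transMap k A H δ χ) (h : H) :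
    leftLift δ.toLinearMap (ℓ h) = 1 ⊗ₜ h := by
  rw [← chi0_eq_leftLift, ← hχ, ← LinearMap.comp_apply (galQ k A H δ), hℓ]
  simp [transMap]

end Galois

lemma apply_mul_eq_rightLift {k A H : Type*} [CommSemiring k] [Semiring A] [Algebra k A]
    [Semiring H] [Algebra k H] (ℓ : H →ₗ[k] A ⊗[k] A)
    (hℓ : ℓ ∘ₗ LinearMap.mul' k H ∘ₗ (TensorProduct.comm k H H).toLinearMap
      = TensorProduct.map (LinearMap.mul' k A)
            (LinearMap.mul' k A ∘ₗ (TensorProduct.comm k A A).toLinearMap)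
          ∘ₗ (TensorProduct.tensorTensorTensorComm k A A A A).toLinearMap
          ∘ₗ TensorProduct.map ℓ ℓ) (h g : H) :
    ℓ (h * g) = rightLift (mulRight k (ℓ h) ∘ₗ (TensorProduct.mk k A A).flip 1) (ℓ g) := by
  have := LinearMap.congr_fun hℓ (g ⊗ₜ h)
  simp only [LinearMap.comp_apply, LinearEquiv.coe_coe, comm_tmul, mul'_apply, map_tmul] at this
  rw [this]
  induction ℓ g using TensorProduct.induction_on with
  | zero => simp
  | tmul u v =>
    simp only [rightLift_tmul, LinearMap.comp_apply, mulRight_apply,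
      LinearMap.flip_apply, TensorProduct.mk_apply]
    induction ℓ h using TensorProduct.induction_on with
    | zero => simp
    | tmul u' v' => simp [Algebra.TensorProduct.tmul_mul_tmul]
    | add s s' hs hs' => simp only [tmul_add, map_add, add_mul, mul_add, hs, hs']
  | add s s' hs hs' => simp only [add_tmul, map_add, hs, hs']

end Paper

open Paper Coalgebra in
theorem strongConnection_twistingMap_general
    (k : Type*) [Field k] (A : Type*) [Ring A] [Algebra k A]
    (H : Type*) [Ring H] [HopfAlgebra k H]
    -- `B = A^{co H} ⊆ A` is a faithfully flat `H`-Galois extension: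
    (δ : A →ₐ[k] A ⊗[k] H)
    (χ : ((A ⊗[k] A) ⧸ galSpan k A H δ) ≃ₗ[k] A ⊗[k] H)
    (hχ : ∀ x : A ⊗[k] A, χ (galQ k A H δ x) = chi0 k A H δ x)
    -- `ℓ` is a strong connection:
    (ℓ : H →ₗ[k] A ⊗[k] A)
    (hℓ2 : galQ k A H δ ∘ₗ ℓ = transMap k A H δ χ)
    -- and satisfies `ℓ(kh) = h⁽¹⁾ k⁽¹⁾ ⊗ k⁽²⁾ h⁽²⁾`:
    (hℓmul : ℓ ∘ₗ LinearMap.mul' k H ∘ₗ (TensorProduct.comm k H H).toLinearMap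
      = TensorProduct.map (LinearMap.mul' k A)
            (LinearMap.mul' k A ∘ₗ (TensorProduct.comm k A A).toLinearMap)
          ∘ₗ (TensorProduct.tensorTensorTensorComm k A A A A).toLinearMap
          ∘ₗ TensorProduct.map ℓ ℓ) :
    -- then `ψ_ℓ : a ⊗ c ↦ a₍₀₎ c (a₍₁₎)⁽¹⁾ ⊗ (a₍₁₎)⁽²⁾` is a twisting map:
    ∀ ψℓ : A ⊗[k] A →ₗ[k] A ⊗[k] A,
      ψℓ = TensorProduct.map
              (LinearMap.mul' k A ∘ₗ lTensor A (LinearMap.mul' k A)) LinearMap.id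
            ∘ₗ TensorProduct.map (lTensor A (TensorProduct.comm k A A).toLinearMap
                ∘ₗ (TensorProduct.assoc k A A A).toLinearMap) LinearMap.id
            ∘ₗ (TensorProduct.assoc k (A ⊗[k] A) A A).symm.toLinearMap
            ∘ₗ lTensor (A ⊗[k] A) (TensorProduct.comm k A A).toLinearMap
            ∘ₗ (TensorProduct.assoc k (A ⊗[k] A) A A).toLinearMap
            ∘ₗ TensorProduct.map (TensorProduct.assoc k A A A).symm.toLinearMap LinearMap.id
            ∘ₗ TensorProduct.map (lTensor A ℓ) LinearMap.id
            ∘ₗ rTensor A δ.toLinearMap →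
      IsTwistingMap k A A ψℓ := by
  intro ψℓ hψ
  rw [hψ, connectionTwist_eq_leftLift_comp_mulLift]
  exact isTwistingMap_leftLift_comp_mulLift δ ℓ
    (leftLift_apply_of_galQ_comp_eq_transMap δ χ hχ ℓ hℓ2) (apply_mul_eq_rightLift ℓ hℓmul)

open Paper Coalgebra in
/-- for a faithfully flat `H`-Galois extension `B ⊆ A` (with bijective
antipode) admitting a strong connection `ℓ` with `ℓ(kh) = h⁽¹⁾k⁽¹⁾ ⊗ k⁽²⁾h⁽²⁾`, the map
`ψ_ℓ(a ⊗ c) = a₍₀₎ c (a₍₁₎)⁽¹⁾ ⊗ (a₍₁₎)⁽²⁾` is a twisting map. -/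
theorem strongConnection_twistingMap
    (k : Type*) [Field k] (A : Type*) [Ring A] [Algebra k A]
    (H : Type*) [Ring H] [HopfAlgebra k H]
    -- the antipode of `H` is bijective, with inverse `sInv`:
    (sInv : H →ₗ[k] H)
    (hs1 : ∀ h : H, HopfAlgebra.antipode (R := k) (sInv h) = h)
    (hs2 : ∀ h : H, sInv (HopfAlgebra.antipode (R := k) h) = h)
    -- `B = A^{co H} ⊆ A` is a faithfully flat `H`-Galois extension:
    (δ : A →ₐ[k] A ⊗[k] H) (hδ : IsComodAlg k A H δ)
    (χ : ((A ⊗[k] A) ⧸ galSpan k A H δ) ≃ₗ[k] A ⊗[k] H)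
    (hχ : ∀ x : A ⊗[k] A, χ (galQ k A H δ x) = chi0 k A H δ x)
    (hff : IsFaithfullyFlatLeft (coinv k A H δ) A)
    -- `ℓ` is a strong connection:
    (ℓ : H →ₗ[k] A ⊗[k] A)
    (hℓ1 : ℓ 1 = (1 : A) ⊗ₜ (1 : A))
    (hℓ2 : galQ k A H δ ∘ₗ ℓ = transMap k A H δ χ)
    (hℓ3 : lTensor A δ.toLinearMap ∘ₗ ℓ
      = (TensorProduct.assoc k A A H).toLinearMap ∘ₗ rTensor H ℓ
          ∘ₗ comul (R := k) (A := H))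
    (hℓ4 : (TensorProduct.assoc k H A A).toLinearMap
        ∘ₗ rTensor A ((TensorProduct.comm k A H).toLinearMap
            ∘ₗ lTensor A sInv ∘ₗ δ.toLinearMap)
        ∘ₗ ℓ
      = lTensor H ℓ ∘ₗ comul (R := k) (A := H))
    -- and satisfies `ℓ(kh) = h⁽¹⁾ k⁽¹⁾ ⊗ k⁽²⁾ h⁽²⁾`:
    (hℓmul : ℓ ∘ₗ LinearMap.mul' k H ∘ₗ (TensorProduct.comm k H H).toLinearMap
      = TensorProduct.map (LinearMap.mul' k A)
            (LinearMap.mul' k A ∘ₗ (TensorProduct.comm k A A).toLinearMap)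
          ∘ₗ (TensorProduct.tensorTensorTensorComm k A A A A).toLinearMap
          ∘ₗ TensorProduct.map ℓ ℓ) :
    -- then `ψ_ℓ : a ⊗ c ↦ a₍₀₎ c (a₍₁₎)⁽¹⁾ ⊗ (a₍₁₎)⁽²⁾` is a twisting map:
    ∀ ψℓ : A ⊗[k] A →ₗ[k] A ⊗[k] A,
      ψℓ = TensorProduct.map
              (LinearMap.mul' k A ∘ₗ lTensor A (LinearMap.mul' k A)) LinearMap.id
            ∘ₗ TensorProduct.map (lTensor A (TensorProduct.comm k A A).toLinearMap
                ∘ₗ (TensorProduct.assoc k A A A).toLinearMap) LinearMap.id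
            ∘ₗ (TensorProduct.assoc k (A ⊗[k] A) A A).symm.toLinearMap
            ∘ₗ lTensor (A ⊗[k] A) (TensorProduct.comm k A A).toLinearMap
            ∘ₗ (TensorProduct.assoc k (A ⊗[k] A) A A).toLinearMap
            ∘ₗ TensorProduct.map (TensorProduct.assoc k A A A).symm.toLinearMap LinearMap.id
            ∘ₗ TensorProduct.map (lTensor A ℓ) LinearMap.id
            ∘ₗ rTensor A δ.toLinearMap →
      IsTwistingMap k A A ψℓ :=
  strongConnection_twistingMap_general k A H δ χ hχ ℓ hℓ2 hℓmul
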